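/- Partition the expected Fisher information matrix of the rank-one PCP model as I(θ) = [[I_F, I_{F,N}ᵀ],[I_{F,N}, I_N]], where I_F is the principal submatrix on the retained indices (all coordinates of a_1 and all but the first coordinate of each a_p, p ∈ {2,…,P}), I_{F,N} is the (P−1) × r block formed by the deleted rows restricted to the retained columns, and I_N is the (P−1) × (P−1) principal block on the deleted indices. Then the Schur complement vanishes: I_N − I_{F,N} I_F^{−1} I_{F,N}ᵀ = 0; consequently I(θ) H = 0 for the (r+P−1) × (P−1) matrix H = [−I_F^{−1} I_{F,N}ᵀ; Id_{P−1}], whose P − 1 columns are linearly independent and form a basis of the null space of I(θ). -/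

import Mathlib

open Finset Matrix

noncomputable section

variable {P : ℕ} {N : Fin P → ℕ}

/-- Factor sum `λ_p = Σ_j a_p(j)`. -/
def lam1 (a : (p : Fin P) → Fin (N p) → ℝ) (p : Fin P) : ℝ :=
  ∑ j, a p j

/-- Index set of the parameter vector `θ`: a pair of a mode `p` and a coordinate of
`a_p`; its cardinality is `Σ_p N_p`. -/
abbrev FullIdx (N : Fin P → ℕ) := (p : Fin P) × Fin (N p)

/-- **Expected Fisher information matrix of the rank-one PCP model**: the symmetric
`(Σ_p N_p) × (Σ_p N_p)` block matrix whose `(p,p)` diagonal block has `(i,j)` entry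
`[i = j] · λ/(λ_p a_p(i))` and whose `(p,q)` off-diagonal block (`p ≠ q`) has every
entry equal to `λ/(λ_p λ_q)`, where `λ = λ_1 ⋯ λ_P`. -/
def fim (a : (p : Fin P) → Fin (N p) → ℝ) : Matrix (FullIdx N) (FullIdx N) ℝ :=
  fun x y =>
    if x = y then (∏ p, lam1 a p) / (lam1 a x.1 * a x.1 x.2)
    else if x.1 = y.1 then 0
    else (∏ p, lam1 a p) / (lam1 a x.1 * lam1 a y.1)

/-- Retained indices: all coordinates of `a_1`, and all but the first coordinate of
each `a_p` for `p ∈ {2,…,P}`. -/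
abbrev RetIdx (N : Fin P → ℕ) := {x : FullIdx N // (x.1 : ℕ) = 0 ∨ (x.2 : ℕ) ≠ 0}

/-- Deleted indices: the first coordinate of each `a_p` for `p ∈ {2,…,P}`. -/
abbrev DelIdx (N : Fin P → ℕ) := {x : FullIdx N // ¬((x.1 : ℕ) = 0 ∨ (x.2 : ℕ) ≠ 0)}

/-- `I_F`: the principal submatrix of `I(θ)` on the retained indices. -/
def fimF (a : (p : Fin P) → Fin (N p) → ℝ) : Matrix (RetIdx N) (RetIdx N) ℝ :=
  fun x y => fim a x.1 y.1

/-- `I_{F,N}`: the deleted rows of `I(θ)` restricted to the retained columns. -/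
def fimFN (a : (p : Fin P) → Fin (N p) → ℝ) : Matrix (DelIdx N) (RetIdx N) ℝ :=
  fun x y => fim a x.1 y.1

/-- `I_N`: the principal submatrix of `I(θ)` on the deleted indices. -/
def fimN (a : (p : Fin P) → Fin (N p) → ℝ) : Matrix (DelIdx N) (DelIdx N) ℝ :=
  fun x y => fim a x.1 y.1

/-- The matrix `H = [−I_F⁻¹ I_{F,N}ᵀ ; Id_{P−1}]`, indexed by all parameter
coordinates (rows) and the deleted coordinates (columns). -/
def Hmat (a : (p : Fin P) → Fin (N p) → ℝ) : Matrix (FullIdx N) (DelIdx N) ℝ :=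
  fun x d =>
    if h : (x.1 : ℕ) = 0 ∨ (x.2 : ℕ) ≠ 0 then -(((fimF a)⁻¹ * (fimFN a)ᵀ) ⟨x, h⟩ d)
    else if x = d.1 then 1 else 0

/-!
Write `t_q = (Σ_j x(q,j)) / λ_q`. Row `(p,i)` of `I(θ) x` equals
`λ/λ_p · (x(p,i)/a_p(i) + Σ_q t_q − t_p)`. Hence every rescaling direction
`x(q,j) = c_q a_q(j)` with `Σ_q c_q = 0` lies in the kernel; taking `c = (e_p − e_{p₀})/a_p(j₀)`
for each deleted index `(p, j₀)` (`p₀` the first mode, `j₀` the first coordinate) gives a matrix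
`W` with `I(θ) W = 0` whose deleted rows form the identity. The same row formula shows that a
vector supported on the retained indices whose image vanishes there is zero, so `I_F` is
invertible. The rest is block linear algebra: the retained rows of `I(θ) W = 0` force `W = H`,
its deleted rows say that the Schur complement vanishes, and for `x` in the kernel,
`x − W x_N` is supported on the retained indices, hence zero.
-/

namespace Matrix

theorem submatrix_val_mul_eq_add {m n k R : Type*} [Fintype n] [CommRing R] (p : m → Prop)
    (q : n → Prop) [DecidablePred q] (A : Matrix m n R) (B : Matrix n k R) :
    (A * B).submatrix (Subtype.val : {i // p i} → m) id =
      A.toBlock p q * B.submatrix (Subtype.val : {i // q i} → n) id +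
        A.toBlock p (¬q ·) * B.submatrix (Subtype.val : {i // ¬q i} → n) id := by
  ext i k
  simp only [submatrix_apply, mul_apply, id]
  exact (Fintype.sum_subtype_add_sum_subtype q fun x => A i x * B x k).symm

variable {ι K : Type*} [Fintype ι] [Field K] {S : ι → Prop} [DecidablePred S]

theorem toBlock_mulVec_restrict_apply {p : ι → Prop} (M : Matrix ι ι K) {x : ι → K}
    (hx : ∀ i, ¬S i → x i = 0) (i : {i // p i}) :
    (M.toBlock p S *ᵥ fun j => x j) i = (M *ᵥ x) i := by
  have hD : ∑ j : {j // ¬S j}, M i j * x j = 0 :=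
    Finset.sum_eq_zero fun j _ => by rw [hx j j.2, mul_zero]
  change ∑ j : {j // S j}, M i j * x j = ∑ j, M i j * x j
  rw [← Fintype.sum_subtype_add_sum_subtype S fun j => M i j * x j, hD, add_zero]

variable [DecidableEq ι] {M : Matrix ι ι K} {W : Matrix ι {i // ¬S i} K}

theorem isUnit_det_toBlock_of_forall_eq_zero
    (hinj : ∀ x : ι → K,
      (∀ i, ¬S i → x i = 0) → (∀ i, S i → (M *ᵥ x) i = 0) → x = 0) :
    IsUnit (M.toBlock S S).det := by
  rw [← isUnit_iff_isUnit_det, ← mulVec_injective_iff_isUnit]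
  refine (injective_iff_map_eq_zero (M.toBlock S S).mulVecLin).2 fun v hv => ?_
  set x : ι → K := fun i => if h : S i then v ⟨i, h⟩ else 0
  have hx : ∀ i, ¬S i → x i = 0 := fun i h => dif_neg h
  have hxv : (fun j : {i // S i} => x j) = v := funext fun j => dif_pos j.2
  have hx0 : x = 0 := hinj x hx fun i h => by
    rw [← toBlock_mulVec_restrict_apply M hx ⟨i, h⟩, hxv]; exact congrFun hv _
  rw [← hxv, hx0]
  rfl

theorem toBlock_mul_submatrix_add_toBlock_eq_zero (p : ι → Prop) (hMW : M * W = 0)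
    (hWD : W.submatrix (Subtype.val : {i // ¬S i} → ι) id = 1) :
    M.toBlock p S * W.submatrix (Subtype.val : {i // S i} → ι) id + M.toBlock p (¬S ·) =
      0 := by
  have h := submatrix_val_mul_eq_add p S M W
  rwa [hMW, hWD, Matrix.mul_one, submatrix_zero, eq_comm] at h

theorem submatrix_val_eq_neg_inv_mul (hMW : M * W = 0)
    (hWD : W.submatrix (Subtype.val : {i // ¬S i} → ι) id = 1)
    (hA : IsUnit (M.toBlock S S).det) :
    W.submatrix (Subtype.val : {i // S i} → ι) id =
      -((M.toBlock S S)⁻¹ * M.toBlock S (¬S ·)) := by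
  have h := eq_neg_of_add_eq_zero_left (toBlock_mul_submatrix_add_toBlock_eq_zero S hMW hWD)
  rw [← Matrix.mul_neg, ← h, ← Matrix.mul_assoc, nonsing_inv_mul _ hA, Matrix.one_mul]

theorem toBlock_sub_mul_inv_mul_eq_zero (hMW : M * W = 0)
    (hWD : W.submatrix (Subtype.val : {i // ¬S i} → ι) id = 1)
    (hA : IsUnit (M.toBlock S S).det) :
    M.toBlock (¬S ·) (¬S ·) -
      M.toBlock (¬S ·) S * (M.toBlock S S)⁻¹ * M.toBlock S (¬S ·) = 0 := by
  have h := toBlock_mul_submatrix_add_toBlock_eq_zero (¬S ·) hMW hWD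
  rw [submatrix_val_eq_neg_inv_mul hMW hWD hA, Matrix.mul_neg, ← Matrix.mul_assoc] at h
  rwa [sub_eq_neg_add]

theorem mulVec_apply_val_of_submatrix_eq_one
    (hWD : W.submatrix (Subtype.val : {i // ¬S i} → ι) id = 1) (v : {i // ¬S i} → K)
    (e : {i // ¬S i}) : (W *ᵥ v) e = v e := by
  have h := congrFun (congrArg (· *ᵥ v) hWD) e
  rwa [one_mulVec] at h

theorem linearIndependent_col_of_submatrix_eq_one
    (hWD : W.submatrix (Subtype.val : {i // ¬S i} → ι) id = 1) : LinearIndependent K W.col := by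
  rw [← mulVec_injective_iff]
  intro v w hvw
  funext e
  rw [← mulVec_apply_val_of_submatrix_eq_one hWD v e,
    ← mulVec_apply_val_of_submatrix_eq_one hWD w e]
  exact congrFun hvw e

theorem range_mulVecLin_eq_ker_of_mul_eq_zero (hMW : M * W = 0)
    (hWD : W.submatrix (Subtype.val : {i // ¬S i} → ι) id = 1)
    (hinj : ∀ x : ι → K,
      (∀ i, ¬S i → x i = 0) → (∀ i, S i → (M *ᵥ x) i = 0) → x = 0) :
    LinearMap.range W.mulVecLin = LinearMap.ker M.mulVecLin := by
  apply le_antisymm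
  · rintro _ ⟨v, rfl⟩
    rw [LinearMap.mem_ker, mulVecLin_apply, mulVecLin_apply, mulVec_mulVec, hMW, zero_mulVec]
  · intro x hx
    rw [LinearMap.mem_ker, mulVecLin_apply] at hx
    refine ⟨fun e => x e, (sub_eq_zero.1 (hinj (x - W *ᵥ fun e => x e) (fun i hi => ?_)
      (fun i _ => ?_))).symm⟩
    · rw [Pi.sub_apply, mulVec_apply_val_of_submatrix_eq_one hWD _ ⟨i, hi⟩, sub_self]
    · rw [mulVec_sub, hx, mulVec_mulVec, hMW, zero_mulVec, sub_zero, Pi.zero_apply]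

end Matrix

theorem eq_zero_of_sum_eq_mul_sum {ι R : Type*} [Fintype ι] [DecidableEq ι] [CommRing R]
    [NoZeroDivisors R] {x w : ι → R} {t : R} {i₀ : ι} (hw : w i₀ ≠ 0) (hx₀ : x i₀ = 0)
    (hx : ∀ i ≠ i₀, x i = t * w i) (hsum : ∑ i, x i = t * ∑ i, w i) : t = 0 := by
  rw [Fintype.sum_eq_add_sum_compl i₀ x, Fintype.sum_eq_add_sum_compl i₀ w, hx₀, zero_add,
    Finset.sum_congr rfl fun i hi => hx i (by simpa using hi), ← Finset.mul_sum] at hsum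
  exact (mul_eq_zero.1 (by linear_combination -hsum : t * w i₀ = 0)).resolve_right hw

theorem Fin.card_val_ne_zero (n : ℕ) : Fintype.card {q : Fin n // (q : ℕ) ≠ 0} = n - 1 := by
  cases n <;> simp [Fintype.card_subtype_compl, Fin.val_eq_zero_iff]

abbrev IsRetained (x : FullIdx N) : Prop := (x.1 : ℕ) = 0 ∨ (x.2 : ℕ) ≠ 0

theorem delIdx_eq_iff {e d : DelIdx N} : e = d ↔ e.1.1 = d.1.1 := by
  refine ⟨fun h => h ▸ rfl, fun h => ?_⟩
  obtain ⟨⟨p, i⟩, hi⟩ := e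
  obtain ⟨⟨q, j⟩, hj⟩ := d
  simp only [not_or, not_not] at hi hj h
  subst h
  exact Subtype.ext (Sigma.ext rfl (heq_of_eq (Fin.ext (hi.2.trans hj.2.symm))))

def delIdxEquiv (hN : ∀ p, 1 ≤ N p) : DelIdx N ≃ {q : Fin P // (q : ℕ) ≠ 0} where
  toFun d := ⟨d.1.1, fun h => d.2 (Or.inl h)⟩
  invFun q := ⟨⟨q, ⟨0, hN q⟩⟩, by simp [q.2]⟩
  left_inv d := delIdx_eq_iff.2 rfl
  right_inv q := rfl

theorem card_delIdx (hN : ∀ p, 1 ≤ N p) : Fintype.card (DelIdx N) = P - 1 := by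
  rw [Fintype.card_congr (delIdxEquiv hN), Fin.card_val_ne_zero]

def blockSum (x : FullIdx N → ℝ) (p : Fin P) : ℝ := ∑ j, x ⟨p, j⟩

theorem fim_apply (a : (p : Fin P) → Fin (N p) → ℝ) (x y : FullIdx N) :
    fim a x y = (∏ q, lam1 a q) / lam1 a x.1 *
      ((if x = y then 1 / a x.1 x.2 else 0) + if x.1 = y.1 then 0 else 1 / lam1 a y.1) := by
  unfold fim
  by_cases hxy : x = y
  · subst hxy
    simp only [if_true, add_zero]
    ring
  · simp only [if_neg hxy, zero_add]
    split_ifs <;> ring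

theorem fim_comm (a : (p : Fin P) → Fin (N p) → ℝ) (x y : FullIdx N) :
    fim a x y = fim a y x := by
  by_cases h : x = y
  · rw [h]
  · simp only [fim, if_neg h, if_neg (Ne.symm h), eq_comm (a := x.1), mul_comm (lam1 a x.1)]

theorem transpose_fimFN (a : (p : Fin P) → Fin (N p) → ℝ) :
    (fimFN a)ᵀ = (fim a).toBlock IsRetained (¬IsRetained ·) := by
  ext x d
  exact fim_comm a d x

theorem sum_offBlock_eq (x : FullIdx N → ℝ) (c : Fin P → ℝ) (p : Fin P) :
    ∑ y : FullIdx N, (if p = y.1 then 0 else c y.1 * x y) =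
      ∑ q, c q * blockSum x q - c p * blockSum x p := by
  have hblock : ∀ q, ∑ j, (if p = q then 0 else c q * x ⟨q, j⟩) =
      c q * blockSum x q - if p = q then c q * blockSum x q else 0 := fun q => by
    split_ifs <;> simp [blockSum, Finset.mul_sum]
  rw [← Finset.univ_sigma_univ, Finset.sum_sigma, Finset.sum_congr rfl fun q _ => hblock q,
    Finset.sum_sub_distrib, Finset.sum_ite_eq, if_pos (Finset.mem_univ p)]

theorem fim_mulVec_apply (a : (p : Fin P) → Fin (N p) → ℝ) (x : FullIdx N → ℝ) (p : Fin P)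
    (i : Fin (N p)) :
    (fim a *ᵥ x) ⟨p, i⟩ = (∏ q, lam1 a q) / lam1 a p *
      (x ⟨p, i⟩ / a p i + ∑ q, blockSum x q / lam1 a q - blockSum x p / lam1 a p) := by
  simp only [mulVec, dotProduct, fim_apply, mul_assoc, ← Finset.mul_sum, add_mul,
    Finset.sum_add_distrib, ite_mul, zero_mul, Finset.sum_ite_eq, Finset.mem_univ, if_true]
  rw [sum_offBlock_eq x (fun q => 1 / lam1 a q) p]
  simp only [one_div_mul_eq_div]
  ring

section

variable {a : (p : Fin P) → Fin (N p) → ℝ}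

theorem lam1_pos (hN : ∀ p, 1 ≤ N p) (ha : ∀ p j, 0 < a p j) (p : Fin P) : 0 < lam1 a p :=
  haveI : Nonempty (Fin (N p)) := ⟨⟨0, hN p⟩⟩
  Finset.sum_pos (fun j _ => ha p j) Finset.univ_nonempty

-- The derivative of the rescaling `a_p ↦ exp (s c_p) • a_p`, which leaves the rank-one tensor
-- unchanged when `Σ_p c_p = 0`.
def scalingDirection (a : (p : Fin P) → Fin (N p) → ℝ) (c : Fin P → ℝ)
    (x : FullIdx N) : ℝ :=
  c x.1 * a x.1 x.2

theorem blockSum_scalingDirection (c : Fin P → ℝ) (p : Fin P) :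
    blockSum (scalingDirection a c) p = c p * lam1 a p := by
  simp only [blockSum, scalingDirection, lam1, Finset.mul_sum]

theorem fim_mulVec_scalingDirection (ha : ∀ p j, a p j ≠ 0) (hlam : ∀ p, lam1 a p ≠ 0)
    (c : Fin P → ℝ) :
    fim a *ᵥ scalingDirection a c = fun x => (∏ q, lam1 a q) / lam1 a x.1 * ∑ q, c q := by
  funext ⟨p, i⟩
  simp only [fim_mulVec_apply, blockSum_scalingDirection, scalingDirection,
    mul_div_cancel_right₀ _ (ha _ _), mul_div_cancel_right₀ _ (hlam _)]
  ring

theorem eq_mul_of_fim_mulVec_eq_zero (ha : ∀ p j, a p j ≠ 0) (hlam : ∀ p, lam1 a p ≠ 0)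
    {x : FullIdx N → ℝ} {p : Fin P} {i : Fin (N p)} (h : (fim a *ᵥ x) ⟨p, i⟩ = 0) :
    x ⟨p, i⟩ = (blockSum x p / lam1 a p - ∑ q, blockSum x q / lam1 a q) * a p i := by
  rw [fim_mulVec_apply] at h
  have hL : (∏ q, lam1 a q) / lam1 a p ≠ 0 :=
    div_ne_zero (Finset.prod_ne_zero_iff.2 fun q _ => hlam q) (hlam p)
  have h' := (mul_eq_zero.1 h).resolve_left hL
  exact (div_eq_iff (ha p i)).1 (by linarith)

theorem eq_zero_of_fim_mulVec_eq_zero_on_retained (ha : ∀ p j, a p j ≠ 0)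
    (hlam : ∀ p, lam1 a p ≠ 0) (hN : ∀ p, 1 ≤ N p) (x : FullIdx N → ℝ)
    (hdel : ∀ u, ¬IsRetained u → x u = 0)
    (hret : ∀ u, IsRetained u → (fim a *ᵥ x) u = 0) :
    x = 0 := by
  set t : Fin P → ℝ := fun q => blockSum x q / lam1 a q
  set T := ∑ q, t q
  have hrow : ∀ p i, IsRetained ⟨p, i⟩ → x ⟨p, i⟩ = (t p - T) * a p i :=
    fun p i h => eq_mul_of_fim_mulVec_eq_zero ha hlam (hret ⟨p, i⟩ h)
  have hblock : ∀ p, blockSum x p = t p * lam1 a p := fun p => (div_mul_cancel₀ _ (hlam p)).symm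
  have hT : ∀ p : Fin P, (p : ℕ) = 0 → T = 0 := by
    intro p hp
    have h : blockSum x p = (t p - T) * lam1 a p := by
      simp only [blockSum, lam1, Finset.mul_sum, hrow p _ (Or.inl hp)]
    rw [hblock, sub_mul] at h
    exact (mul_eq_zero.1 (by linarith : T * lam1 a p = 0)).resolve_right (hlam p)
  have ht : ∀ p : Fin P, (p : ℕ) ≠ 0 → t p = 0 := fun p hp =>
    eq_zero_of_sum_eq_mul_sum (i₀ := ⟨0, hN p⟩) (ha p _) (hdel _ (by simp [hp]))
      (fun i hi => by
        rw [hrow p i (Or.inr fun h => hi (Fin.ext h)), hT ⟨0, p.pos⟩ rfl, sub_zero])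
      (hblock p)
  funext ⟨p, i⟩
  have hT₀ : T = 0 := hT ⟨0, p.pos⟩ rfl
  have htp : ∀ q, t q = 0 := fun q => by
    by_cases hq : (q : ℕ) = 0
    · rw [← hT₀]
      exact (Finset.sum_eq_single q (fun r _ hr => ht r fun h => hr (Fin.ext (h.trans hq.symm)))
        (fun h => absurd (Finset.mem_univ q) h)).symm
    · exact ht q hq
  by_cases h : IsRetained ⟨p, i⟩
  · rw [hrow p i h, htp, hT₀, sub_zero, zero_mul, Pi.zero_apply]
  · exact hdel _ h

def nullCoeff (a : (p : Fin P) → Fin (N p) → ℝ) (d : DelIdx N) (q : Fin P) : ℝ :=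
  ((if q = d.1.1 then 1 else 0) - if q = ⟨0, d.1.1.pos⟩ then 1 else 0) / a d.1.1 d.1.2

def nullBasis (a : (p : Fin P) → Fin (N p) → ℝ) : Matrix (FullIdx N) (DelIdx N) ℝ :=
  fun x d => scalingDirection a (nullCoeff a d) x

theorem sum_nullCoeff (d : DelIdx N) : ∑ q, nullCoeff a d q = 0 := by
  simp [nullCoeff, ← Finset.sum_div, Finset.sum_sub_distrib]

theorem fim_mul_nullBasis (ha : ∀ p j, a p j ≠ 0) (hlam : ∀ p, lam1 a p ≠ 0) :
    fim a * nullBasis a = 0 := by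
  ext x d
  change (fim a *ᵥ scalingDirection a (nullCoeff a d)) x = 0
  rw [fim_mulVec_scalingDirection ha hlam, sum_nullCoeff]
  exact mul_zero _

theorem nullBasis_submatrix_del (ha : ∀ p j, a p j ≠ 0) :
    (nullBasis a).submatrix (Subtype.val : DelIdx N → FullIdx N) id = 1 := by
  ext e d
  have he : e.1.1 ≠ ⟨0, d.1.1.pos⟩ := fun h => e.2 (Or.inl (congrArg Fin.val h))
  simp only [submatrix_apply, id, nullBasis, scalingDirection, nullCoeff, if_neg he, sub_zero,
    one_apply, delIdx_eq_iff]
  split_ifs with h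
  · obtain rfl := delIdx_eq_iff.2 h
    exact one_div_mul_cancel (ha _ _)
  · simp

theorem Hmat_eq_nullBasis (ha : ∀ p j, a p j ≠ 0) (hlam : ∀ p, lam1 a p ≠ 0)
    (hN : ∀ p, 1 ≤ N p) : Hmat a = nullBasis a := by
  have hW_ret := submatrix_val_eq_neg_inv_mul (fim_mul_nullBasis ha hlam)
    (nullBasis_submatrix_del ha)
    (isUnit_det_toBlock_of_forall_eq_zero (eq_zero_of_fim_mulVec_eq_zero_on_retained ha hlam hN))
  have hW_del := nullBasis_submatrix_del ha
  funext x d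
  unfold Hmat
  split_ifs with h h'
  · rw [transpose_fimFN]
    exact (congrFun (congrFun hW_ret ⟨x, h⟩) d).symm
  all_goals
    have hx := congrFun (congrFun hW_del ⟨x, h⟩) d
    simp only [submatrix_apply, id, one_apply, Subtype.ext_iff] at hx
    rw [hx]
    simp [h']

end

theorem stmt_19_general (P : ℕ) (N : Fin P → ℕ) (hN : ∀ p, 1 ≤ N p)
    (a : (p : Fin P) → Fin (N p) → ℝ) (ha : ∀ p j, 0 < a p j) :
    Fintype.card (DelIdx N) = P - 1 ∧
    fimN a - fimFN a * (fimF a)⁻¹ * (fimFN a)ᵀ = 0 ∧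
    fim a * Hmat a = 0 ∧
    LinearIndependent ℝ (fun d : DelIdx N => fun x : FullIdx N => Hmat a x d) ∧
    Submodule.span ℝ (Set.range (fun d : DelIdx N => fun x : FullIdx N => Hmat a x d)) =
      LinearMap.ker (fim a).mulVecLin := by
  have ha₀ : ∀ p j, a p j ≠ 0 := fun p j => (ha p j).ne'
  have hlam : ∀ p, lam1 a p ≠ 0 := fun p => (lam1_pos hN ha p).ne'
  have hMW := fim_mul_nullBasis ha₀ hlam
  have hWD := nullBasis_submatrix_del ha₀
  have hinj := eq_zero_of_fim_mulVec_eq_zero_on_retained ha₀ hlam hN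
  have hH := Hmat_eq_nullBasis ha₀ hlam hN
  refine ⟨card_delIdx hN, ?_, hH ▸ hMW,
    hH ▸ linearIndependent_col_of_submatrix_eq_one hWD, ?_⟩
  · rw [transpose_fimFN]
    exact toBlock_sub_mul_inv_mul_eq_zero hMW hWD (isUnit_det_toBlock_of_forall_eq_zero hinj)
  · rw [hH]
    exact (range_mulVecLin _).symm.trans (range_mulVecLin_eq_ker_of_mul_eq_zero hMW hWD hinj)

/-- **Null space of the expected Fisher information matrix.** Partitioning `I(θ)` into
the blocks `I_F`, `I_{F,N}` and `I_N` on retained/deleted indices, the Schur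
complement vanishes: `I_N − I_{F,N} I_F⁻¹ I_{F,N}ᵀ = 0`; consequently `I(θ) H = 0`
for `H = [−I_F⁻¹ I_{F,N}ᵀ ; Id_{P−1}]`, and the `P − 1` columns of `H` are linearly
independent and span (form a basis of) the null space of `I(θ)`. -/
theorem stmt_19 (P : ℕ) (hP : 2 ≤ P) (N : Fin P → ℕ) (hN : ∀ p, 1 ≤ N p)
    (a : (p : Fin P) → Fin (N p) → ℝ) (ha : ∀ p j, 0 < a p j) :
    Fintype.card (DelIdx N) = P - 1 ∧
    fimN a - fimFN a * (fimF a)⁻¹ * (fimFN a)ᵀ = 0 ∧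
    fim a * Hmat a = 0 ∧
    LinearIndependent ℝ (fun d : DelIdx N => fun x : FullIdx N => Hmat a x d) ∧
    Submodule.span ℝ (Set.range (fun d : DelIdx N => fun x : FullIdx N => Hmat a x d)) =
      LinearMap.ker (fim a).mulVecLin :=
  stmt_19_general P N hN a ha
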